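/- For any admissible state U (i.e., ρ > 0 and 𝓔(U) > 0) and any v*, B* ∈ ℝ³, the strict inequality |√ρ (v - v*) · (B - B*)| < U · n* + |B*|²/2 holds, where v = m/ρ and n* = (|v*|²/2, -v*, -B*, 1). -/
import Mathlib


/-- For an admissible state (ρ > 0, 𝓔(U) > 0) and any v*, B* ∈ ℝ³,
|√ρ (v - v*) · (B - B*)| < U · n* + |B*|²/2, where v = m/ρ. -/
theorem key_strict_inequality (ρ E : ℝ) (m B : Fin 3 → ℝ) (hρ : 0 < ρ)
    (hE : 0 < E - ((∑ i, (m i) ^ 2) / ρ + ∑ i, (B i) ^ 2) / 2) (vs Bs : Fin 3 → ℝ) :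
    |Real.sqrt ρ * ∑ i, (m i / ρ - vs i) * (B i - Bs i)| <
      ρ * (∑ i, (vs i) ^ 2) / 2 - (∑ i, m i * vs i) - (∑ i, B i * Bs i) + E
        + (∑ i, (Bs i) ^ 2) / 2 := by
  set a : Fin 3 → ℝ := fun i => m i / ρ - vs i with ha
  set b : Fin 3 → ℝ := fun i => B i - Bs i with hb
  have hρ' : ρ ≠ 0 := ne_of_gt hρ
  have hA : ρ * ∑ i, (a i) ^ 2
      = (∑ i, (m i) ^ 2) / ρ - 2 * (∑ i, m i * vs i) + ρ * ∑ i, (vs i) ^ 2 := by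
    simp only [ha, Fin.sum_univ_three]
    field_simp
    ring
  have hBsum : ∑ i, (b i) ^ 2
      = ∑ i, (B i) ^ 2 - 2 * (∑ i, B i * Bs i) + ∑ i, (Bs i) ^ 2 := by
    simp only [hb, Fin.sum_univ_three]; ring
  have hCS : (∑ i, a i * b i) ^ 2 ≤ (∑ i, (a i) ^ 2) * (∑ i, (b i) ^ 2) :=
    Finset.sum_mul_sq_le_sq_mul_sq _ _ _
  have hAnn : 0 ≤ ρ * ∑ i, (a i) ^ 2 :=
    mul_nonneg hρ.le (Finset.sum_nonneg fun i _ => sq_nonneg _)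
  have hBnn : 0 ≤ ∑ i, (b i) ^ 2 := Finset.sum_nonneg fun i _ => sq_nonneg _
  have hsq : (Real.sqrt ρ * ∑ i, a i * b i) ^ 2
      ≤ (ρ * ∑ i, (a i) ^ 2) * (∑ i, (b i) ^ 2) := by
    rw [mul_pow, Real.sq_sqrt hρ.le, mul_assoc]
    exact mul_le_mul_of_nonneg_left hCS hρ.le
  have hkey : |Real.sqrt ρ * ∑ i, a i * b i|
      ≤ ((ρ * ∑ i, (a i) ^ 2) + (∑ i, (b i) ^ 2)) / 2 := by
    nlinarith [sq_abs (Real.sqrt ρ * ∑ i, a i * b i),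
      abs_nonneg (Real.sqrt ρ * ∑ i, a i * b i),
      sq_nonneg ((ρ * ∑ i, (a i) ^ 2) - (∑ i, (b i) ^ 2))]
  calc |Real.sqrt ρ * ∑ i, a i * b i|
      ≤ ((ρ * ∑ i, (a i) ^ 2) + (∑ i, (b i) ^ 2)) / 2 := hkey
    _ < _ := by rw [hA, hBsum]; linarith
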